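/- Let ω > 0, let K, K*, n be positive integers with K ≤ K* and n > 2K*, let x_i = 2π(i−1)/(ωn) for i = 1,…,n, let β* ∈ ℝ^{2K*+1}, and let c₀ ∈ ℝ. Then the function B ↦ ∑_{i=1}^n ( f_{K*}(x_i)ᵀβ* + c₀ − f_K(x_i)ᵀB )² on ℝ^{2K+1} attains its minimum exactly at the vector B̂ with B̂_0 = β*_0 + c₀ and B̂_j = β*_j for 1 ≤ j ≤ 2K; that is, B̂ is a minimizer, and any minimizer equals B̂. -/
import Mathlib


open Real Finset

/-- The order-`K` trigonometric regression design vector at time `x` with frequency `ω`: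
component `0` is `1`, component `2k-1` is `sin (k ω x)`, component `2k` is `cos (k ω x)`. -/
noncomputable def designVec (K : ℕ) (ω x : ℝ) : Fin (2 * K + 1) → ℝ := fun j =>
  if j.val = 0 then 1
  else if j.val % 2 = 1 then Real.sin ((((j.val + 1) / 2 : ℕ) : ℝ) * ω * x)
  else Real.cos (((j.val / 2 : ℕ) : ℝ) * ω * x)

lemma expSum (n : ℕ) (hn : 0 < n) (q : ℤ) (hq : ¬ (n:ℤ) ∣ q) :
    ∑ i ∈ Finset.range n, Complex.exp (((q * (2 * π * i / n) : ℝ) : ℂ) * Complex.I) = 0 := by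
  have hn' : (n:ℝ) ≠ 0 := Nat.cast_ne_zero.mpr hn.ne'
  have hnC : (n:ℂ) ≠ 0 := Nat.cast_ne_zero.mpr hn.ne'
  set z : ℂ := Complex.exp (((q * (2 * π / n) : ℝ) : ℂ) * Complex.I) with hz
  have hterm : ∀ i ∈ Finset.range n,
      Complex.exp (((q * (2 * π * i / n) : ℝ) : ℂ) * Complex.I) = z ^ i := by
    intro i _
    rw [hz, ← Complex.exp_nat_mul]
    congr 1
    push_cast
    field_simp
  rw [Finset.sum_congr rfl hterm]
  have hzn : z ^ n = 1 := by
    rw [hz, ← Complex.exp_nat_mul]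
    have h5 : ((n:ℂ)) * (((q * (2 * π / n) : ℝ) : ℂ) * Complex.I) = (q:ℂ) * (2 * π * Complex.I) := by
      push_cast
      field_simp
    rw [h5, Complex.exp_int_mul_two_pi_mul_I]
  have hz1 : z ≠ 1 := by
    intro h
    obtain ⟨m, hm⟩ := Complex.exp_eq_one_iff.mp h
    rw [show ((m:ℂ) * (2 * π * Complex.I)) = ((m * (2*π) : ℝ):ℂ) * Complex.I by push_cast; ring] at hm
    have h2 := mul_right_cancel₀ Complex.I_ne_zero hm
    have h3 : (q : ℝ) * (2 * π / n) = m * (2 * π) := Complex.ofReal_inj.mp h2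
    apply hq
    refine ⟨m, ?_⟩
    have hπ : (2:ℝ) * π ≠ 0 := by positivity
    have h4 : (q:ℝ) = (n:ℝ) * m := by
      field_simp at h3
      nlinarith [pi_pos, h3]
    exact_mod_cast h4
  rw [geom_sum_eq hz1, hzn, sub_self, zero_div]

lemma cosSum (n : ℕ) (hn : 0 < n) (q : ℤ) :
    ∑ i ∈ Finset.range n, Real.cos (q * (2 * π * i / n)) =
      if (n:ℤ) ∣ q then (n:ℝ) else 0 := by
  have hn' : (n:ℝ) ≠ 0 := Nat.cast_ne_zero.mpr hn.ne'
  by_cases h : (n:ℤ) ∣ q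
  · obtain ⟨m, rfl⟩ := h
    rw [if_pos ⟨m, rfl⟩]
    have : ∀ i ∈ Finset.range n, Real.cos ((n*m : ℤ) * (2 * π * i / n)) = 1 := by
      intro i _
      have harg : ((n*m : ℤ) : ℝ) * (2 * π * i / n) = ((m * i : ℤ) : ℝ) * (2 * π) := by
        push_cast
        field_simp
      rw [harg, Real.cos_int_mul_two_pi]
    rw [Finset.sum_congr rfl this, Finset.sum_const, Finset.card_range]
    simp
  · rw [if_neg h]
    have := congrArg Complex.re (expSum n hn q h)
    rw [Complex.re_sum] at this
    simp only [Complex.exp_ofReal_mul_I_re] at this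
    exact this

lemma sinSum (n : ℕ) (hn : 0 < n) (q : ℤ) :
    ∑ i ∈ Finset.range n, Real.sin (q * (2 * π * i / n)) = 0 := by
  have hn' : (n:ℝ) ≠ 0 := Nat.cast_ne_zero.mpr hn.ne'
  by_cases h : (n:ℤ) ∣ q
  · obtain ⟨m, rfl⟩ := h
    have : ∀ i ∈ Finset.range n, Real.sin ((n*m : ℤ) * (2 * π * i / n)) = 0 := by
      intro i _
      have harg : ((n*m : ℤ) : ℝ) * (2 * π * i / n) = ((2 * m * i : ℤ) : ℝ) * π := by
        push_cast
        field_simp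
      rw [harg, Real.sin_int_mul_pi]
    rw [Finset.sum_congr rfl this, Finset.sum_const]
    simp
  · have := congrArg Complex.im (expSum n hn q h)
    rw [Complex.im_sum] at this
    simp only [Complex.exp_ofReal_mul_I_im] at this
    exact this

lemma sumCC (n : ℕ) (hn : 0 < n) (a b : ℤ) :
    ∑ i ∈ Finset.range n, Real.cos (a * (2 * π * i / n)) * Real.cos (b * (2 * π * i / n)) =
      ((if (n:ℤ) ∣ (a - b) then (n:ℝ) else 0) + (if (n:ℤ) ∣ (a + b) then (n:ℝ) else 0)) / 2 := by
  have h : ∀ i ∈ Finset.range n, Real.cos (a * (2 * π * i / n)) * Real.cos (b * (2 * π * i / n))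
      = (Real.cos ((a - b : ℤ) * (2 * π * i / n)) + Real.cos ((a + b : ℤ) * (2 * π * i / n))) / 2 := by
    intro i _
    have e1 : (((a - b : ℤ)) : ℝ) * (2 * π * i / n) = a * (2 * π * i / n) - b * (2 * π * i / n) := by
      push_cast; ring
    have e2 : (((a + b : ℤ)) : ℝ) * (2 * π * i / n) = a * (2 * π * i / n) + b * (2 * π * i / n) := by
      push_cast; ring
    rw [e1, e2, Real.cos_sub, Real.cos_add]
    ring
  rw [Finset.sum_congr rfl h, ← Finset.sum_div, Finset.sum_add_distrib,
    cosSum n hn (a - b), cosSum n hn (a + b)]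

lemma sumSS (n : ℕ) (hn : 0 < n) (a b : ℤ) :
    ∑ i ∈ Finset.range n, Real.sin (a * (2 * π * i / n)) * Real.sin (b * (2 * π * i / n)) =
      ((if (n:ℤ) ∣ (a - b) then (n:ℝ) else 0) - (if (n:ℤ) ∣ (a + b) then (n:ℝ) else 0)) / 2 := by
  have h : ∀ i ∈ Finset.range n, Real.sin (a * (2 * π * i / n)) * Real.sin (b * (2 * π * i / n))
      = (Real.cos ((a - b : ℤ) * (2 * π * i / n)) - Real.cos ((a + b : ℤ) * (2 * π * i / n))) / 2 := by
    intro i _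
    have e1 : (((a - b : ℤ)) : ℝ) * (2 * π * i / n) = a * (2 * π * i / n) - b * (2 * π * i / n) := by
      push_cast; ring
    have e2 : (((a + b : ℤ)) : ℝ) * (2 * π * i / n) = a * (2 * π * i / n) + b * (2 * π * i / n) := by
      push_cast; ring
    rw [e1, e2, Real.cos_sub, Real.cos_add]
    ring
  rw [Finset.sum_congr rfl h, ← Finset.sum_div, Finset.sum_sub_distrib,
    cosSum n hn (a - b), cosSum n hn (a + b)]

lemma sumSC (n : ℕ) (hn : 0 < n) (a b : ℤ) :
    ∑ i ∈ Finset.range n, Real.sin (a * (2 * π * i / n)) * Real.cos (b * (2 * π * i / n)) = 0 := by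
  have h : ∀ i ∈ Finset.range n, Real.sin (a * (2 * π * i / n)) * Real.cos (b * (2 * π * i / n))
      = (Real.sin ((a + b : ℤ) * (2 * π * i / n)) + Real.sin ((a - b : ℤ) * (2 * π * i / n))) / 2 := by
    intro i _
    have e1 : (((a - b : ℤ)) : ℝ) * (2 * π * i / n) = a * (2 * π * i / n) - b * (2 * π * i / n) := by
      push_cast; ring
    have e2 : (((a + b : ℤ)) : ℝ) * (2 * π * i / n) = a * (2 * π * i / n) + b * (2 * π * i / n) := by
      push_cast; ring
    rw [e1, e2, Real.sin_sub, Real.sin_add]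
    ring
  rw [Finset.sum_congr rfl h, ← Finset.sum_div, Finset.sum_add_distrib,
    sinSum n hn (a + b), sinSum n hn (a - b)]
  norm_num

lemma designVec_eq (K : ℕ) (ω x : ℝ) (j : Fin (2 * K + 1)) :
    designVec K ω x j =
      if j.val % 2 = 0 then Real.cos ((((j.val + 1) / 2 : ℕ) : ℝ) * (ω * x))
      else Real.sin ((((j.val + 1) / 2 : ℕ) : ℝ) * (ω * x)) := by
  unfold designVec
  rcases Nat.eq_zero_or_pos j.val with h0 | h0
  · rw [if_pos h0, h0]
    norm_num
  · rw [if_neg h0.ne']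
    rcases Nat.mod_two_eq_zero_or_one j.val with h2 | h2
    · rw [if_neg (by omega), if_pos h2]
      have : (j.val + 1) / 2 = j.val / 2 := by omega
      rw [this, mul_assoc]
    · rw [if_pos h2, if_neg (by omega), mul_assoc]

lemma gram (Ks n : ℕ) (hn : 2 * Ks < n) (ω : ℝ) (hω : ω ≠ 0)
    (x : Fin n → ℝ) (hx : ∀ i : Fin n, x i = 2 * π * i / (ω * n))
    (j1 j2 : Fin (2 * Ks + 1)) :
    ∑ i : Fin n, designVec Ks ω (x i) j1 * designVec Ks ω (x i) j2 =
      if j1 = j2 then (if j1.val = 0 then (n:ℝ) else (n:ℝ) / 2) else 0 := by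
  have hn0 : 0 < n := by omega
  have hn' : (n:ℝ) ≠ 0 := Nat.cast_ne_zero.mpr hn0.ne'
  set a := (j1.val + 1) / 2 with ha
  set b := (j2.val + 1) / 2 with hb
  have haK : a ≤ Ks := by have := j1.isLt; omega
  have hbK : b ≤ Ks := by have := j2.isLt; omega
  have hωx : ∀ i : Fin n, ω * x i = 2 * π * (i:ℕ) / n := by
    intro i; rw [hx i]; field_simp
  have hdvd1 : ((n:ℤ) ∣ ((a:ℤ) - b)) ↔ a = b := by
    constructor
    · intro h
      have := Int.eq_zero_of_dvd_of_natAbs_lt_natAbs h (by omega)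
      omega
    · intro h; rw [h]; simp
  have hdvd2 : ((n:ℤ) ∣ ((a:ℤ) + b)) ↔ (a = 0 ∧ b = 0) := by
    constructor
    · intro h
      have := Int.eq_zero_of_dvd_of_natAbs_lt_natAbs h (by omega)
      omega
    · rintro ⟨h1, h2⟩; rw [h1, h2]; simp
  rcases Nat.mod_two_eq_zero_or_one j1.val with hp1 | hp1 <;>
    rcases Nat.mod_two_eq_zero_or_one j2.val with hp2 | hp2
  · -- cos * cos
    have hsum : ∑ i : Fin n, designVec Ks ω (x i) j1 * designVec Ks ω (x i) j2
        = ∑ i ∈ Finset.range n,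
            Real.cos (((a:ℤ):ℝ) * (2 * π * i / n)) * Real.cos (((b:ℤ):ℝ) * (2 * π * i / n)) := by
      rw [← Fin.sum_univ_eq_sum_range (fun i : ℕ =>
        Real.cos (((a:ℤ):ℝ) * (2 * π * i / n)) * Real.cos (((b:ℤ):ℝ) * (2 * π * i / n))) n]
      refine Finset.sum_congr rfl fun i _ => ?_
      rw [designVec_eq, designVec_eq, if_pos hp1, if_pos hp2, hωx i, ← ha, ← hb]
      norm_cast
    rw [hsum, sumCC n hn0 a b]
    by_cases hab : a = b
    · rw [if_pos (Fin.val_inj.mp (by omega))]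
      by_cases ha0 : a = 0
      · rw [if_pos (show j1.val = 0 by omega), if_pos (hdvd1.mpr hab),
          if_pos (hdvd2.mpr ⟨ha0, by omega⟩)]
        ring
      · have h2 : ¬ ((n:ℤ) ∣ ((a:ℤ) + b)) := fun h => ha0 (hdvd2.mp h).1
        rw [if_neg (show ¬ j1.val = 0 by omega), if_pos (hdvd1.mpr hab), if_neg h2]
        ring
    · have hj : j1 ≠ j2 := fun h => hab (by rw [ha, hb, h])
      have h1 : ¬ ((n:ℤ) ∣ ((a:ℤ) - b)) := fun h => hab (hdvd1.mp h)
      have h2 : ¬ ((n:ℤ) ∣ ((a:ℤ) + b)) := fun h => hab (by have := hdvd2.mp h; omega)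
      rw [if_neg h1, if_neg h2, if_neg hj]
      norm_num
  · -- cos * sin
    have hsum : ∑ i : Fin n, designVec Ks ω (x i) j1 * designVec Ks ω (x i) j2
        = ∑ i ∈ Finset.range n,
            Real.sin (((b:ℤ):ℝ) * (2 * π * i / n)) * Real.cos (((a:ℤ):ℝ) * (2 * π * i / n)) := by
      rw [← Fin.sum_univ_eq_sum_range (fun i : ℕ =>
        Real.sin (((b:ℤ):ℝ) * (2 * π * i / n)) * Real.cos (((a:ℤ):ℝ) * (2 * π * i / n))) n]
      refine Finset.sum_congr rfl fun i _ => ?_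
      rw [designVec_eq, designVec_eq, if_pos hp1, if_neg (by omega), hωx i, ← ha, ← hb]
      norm_cast
      ring
    rw [hsum, sumSC n hn0 b a, if_neg (fun h => by rw [h] at hp1; omega)]
  · -- sin * cos
    have hsum : ∑ i : Fin n, designVec Ks ω (x i) j1 * designVec Ks ω (x i) j2
        = ∑ i ∈ Finset.range n,
            Real.sin (((a:ℤ):ℝ) * (2 * π * i / n)) * Real.cos (((b:ℤ):ℝ) * (2 * π * i / n)) := by
      rw [← Fin.sum_univ_eq_sum_range (fun i : ℕ =>
        Real.sin (((a:ℤ):ℝ) * (2 * π * i / n)) * Real.cos (((b:ℤ):ℝ) * (2 * π * i / n))) n]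
      refine Finset.sum_congr rfl fun i _ => ?_
      rw [designVec_eq, designVec_eq, if_neg (by omega), if_pos hp2, hωx i, ← ha, ← hb]
      norm_cast
    rw [hsum, sumSC n hn0 a b, if_neg (fun h => by rw [h] at hp1; omega)]
  · -- sin * sin
    have hsum : ∑ i : Fin n, designVec Ks ω (x i) j1 * designVec Ks ω (x i) j2
        = ∑ i ∈ Finset.range n,
            Real.sin (((a:ℤ):ℝ) * (2 * π * i / n)) * Real.sin (((b:ℤ):ℝ) * (2 * π * i / n)) := by
      rw [← Fin.sum_univ_eq_sum_range (fun i : ℕ =>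
        Real.sin (((a:ℤ):ℝ) * (2 * π * i / n)) * Real.sin (((b:ℤ):ℝ) * (2 * π * i / n))) n]
      refine Finset.sum_congr rfl fun i _ => ?_
      rw [designVec_eq, designVec_eq, if_neg (by omega), if_neg (by omega), hωx i, ← ha, ← hb]
      norm_cast
    rw [hsum, sumSS n hn0 a b]
    by_cases hab : a = b
    · have h2 : ¬ ((n:ℤ) ∣ ((a:ℤ) + b)) := fun h => by have := hdvd2.mp h; omega
      rw [if_pos (Fin.val_inj.mp (by omega)), if_neg (show ¬ j1.val = 0 by omega),
        if_pos (hdvd1.mpr hab), if_neg h2]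
      ring
    · have hj : j1 ≠ j2 := fun h => hab (by rw [ha, hb, h])
      have h1 : ¬ ((n:ℤ) ∣ ((a:ℤ) - b)) := fun h => hab (hdvd1.mp h)
      have h2 : ¬ ((n:ℤ) ∣ ((a:ℤ) + b)) := fun h => by have := hdvd2.mp h; omega
      rw [if_neg h1, if_neg h2, if_neg hj]
      norm_num

lemma expand2 {n : ℕ} {ι : Type*} [Fintype ι] [DecidableEq ι] (F : Fin n → ι → ℝ) (w : ι → ℝ)
    (horth : ∀ j1 j2 : ι, ∑ i : Fin n, F i j1 * F i j2 = if j1 = j2 then w j1 else 0)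
    (c1 c2 : ι → ℝ) :
    ∑ i : Fin n, (∑ j : ι, F i j * c1 j) * (∑ j : ι, F i j * c2 j)
      = ∑ j : ι, w j * (c1 j * c2 j) := by
  have h1 : ∀ i : Fin n, (∑ j : ι, F i j * c1 j) * (∑ j : ι, F i j * c2 j)
      = ∑ j : ι, ∑ j' : ι, (F i j * F i j') * (c1 j * c2 j') := by
    intro i
    rw [Finset.sum_mul_sum]
    exact Finset.sum_congr rfl fun j _ => Finset.sum_congr rfl fun j' _ => by ring
  rw [Finset.sum_congr rfl fun i _ => h1 i, Finset.sum_comm]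
  have h2 : ∀ j : ι, ∑ i : Fin n, ∑ j' : ι, (F i j * F i j') * (c1 j * c2 j')
      = ∑ j' : ι, (∑ i : Fin n, F i j * F i j') * (c1 j * c2 j') := by
    intro j
    rw [Finset.sum_comm]
    exact Finset.sum_congr rfl fun j' _ => by rw [← Finset.sum_mul]
  rw [Finset.sum_congr rfl fun j _ => h2 j]
  simp only [horth, ite_mul, zero_mul]
  refine Finset.sum_congr rfl fun j _ => ?_
  rw [Finset.sum_ite_eq Finset.univ j fun j' => w j * (c1 j * c2 j')]
  simp

/-- Extend a coefficient vector on `Fin (2K+1)` by zero to `Fin (2Ks+1)`. -/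
def embAux (K Ks : ℕ) (v : Fin (2*K+1) → ℝ) : Fin (2*Ks+1) → ℝ := fun j' =>
  if h : j'.val < 2*K+1 then v ⟨j'.val, h⟩ else 0

lemma reindex {K Ks n : ℕ} (hle : 2*K+1 ≤ 2*Ks+1) (G : Fin (2*Ks+1) → ℝ)
    (v : Fin (2*K+1) → ℝ) :
    ∑ j : Fin (2*K+1), G (Fin.castLE hle j) * v j
      = ∑ j' : Fin (2*Ks+1), G j' * embAux K Ks v j' := by
  have hsub := Finset.sum_subset
    (Finset.subset_univ ((Finset.univ : Finset (Fin (2*K+1))).map (Fin.castLEEmb hle)))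
    (f := fun j' => G j' * embAux K Ks v j') ?_
  · rw [← hsub, Finset.sum_map]
    refine Finset.sum_congr rfl fun j _ => ?_
    have hval : ((Fin.castLEEmb hle) j).val = j.val := rfl
    unfold embAux
    rw [Fin.castLEEmb_apply]
    rw [dif_pos (show (Fin.castLE hle j).val < 2*K+1 from j.isLt)]
    congr 1
  · intro j' _ hj'
    have hnl : ¬ j'.val < 2*K+1 := by
      intro h
      exact hj' (Finset.mem_map.mpr ⟨⟨j'.val, h⟩, Finset.mem_univ _, by
        ext; simp [Fin.castLEEmb_apply]⟩)
    simp [embAux, hnl]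

/-- Under the equispaced design with `n > 2K*` and `K ≤ K*`, the underspecified least
squares objective for the target `f_{K*}(x)ᵀβ* + c₀` attains its minimum exactly at the
vector whose intercept is `β*₀ + c₀` and whose harmonic coefficients are those of `β*`. -/
theorem underspecified_least_squares_intercept_shift (ω : ℝ) (hω : 0 < ω) (K Kstar n : ℕ)
    (hK : 1 ≤ K) (hKK : K ≤ Kstar) (hn : 2 * Kstar < n)
    (x : Fin n → ℝ) (hx : ∀ i : Fin n, x i = 2 * π * i / (ω * n))
    (βstar : Fin (2 * Kstar + 1) → ℝ) (c₀ : ℝ)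
    (L : (Fin (2 * K + 1) → ℝ) → ℝ)
    (hL : ∀ B : Fin (2 * K + 1) → ℝ,
      L B = ∑ i : Fin n,
        ((∑ j' : Fin (2 * Kstar + 1), designVec Kstar ω (x i) j' * βstar j') + c₀ -
          (∑ j : Fin (2 * K + 1), designVec K ω (x i) j * B j)) ^ 2)
    (Bhat : Fin (2 * K + 1) → ℝ)
    (hBhat0 : Bhat 0 = βstar 0 + c₀)
    (hBhatj : ∀ j : Fin (2 * K + 1), 1 ≤ j.val → Bhat j = βstar (Fin.castLE (by omega) j)) :
    (∀ B : Fin (2 * K + 1) → ℝ, L Bhat ≤ L B) ∧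
    (∀ B : Fin (2 * K + 1) → ℝ, (∀ B' : Fin (2 * K + 1) → ℝ, L B ≤ L B') → B = Bhat) := by
  have hn0 : 0 < n := by omega
  have hle : 2 * K + 1 ≤ 2 * Kstar + 1 := by omega
  set w : Fin (2 * Kstar + 1) → ℝ := fun j' => if j'.val = 0 then (n:ℝ) else (n:ℝ)/2 with hwdef
  have hwpos : ∀ j', 0 < w j' := by
    intro j'
    simp only [hwdef]
    split <;> positivity
  have horth : ∀ j1 j2 : Fin (2 * Kstar + 1),
      ∑ i : Fin n, designVec Kstar ω (x i) j1 * designVec Kstar ω (x i) j2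
        = if j1 = j2 then w j1 else 0 :=
    fun j1 j2 => gram Kstar n hn ω hω.ne' x hx j1 j2
  set βt : Fin (2 * Kstar + 1) → ℝ :=
    fun j' => if j' = 0 then βstar 0 + c₀ else βstar j' with hβt
  -- residual rewriting
  have hresid : ∀ (B : Fin (2 * K + 1) → ℝ) (i : Fin n),
      ((∑ j' : Fin (2 * Kstar + 1), designVec Kstar ω (x i) j' * βstar j') + c₀ -
        (∑ j : Fin (2 * K + 1), designVec K ω (x i) j * B j))
      = ∑ j' : Fin (2 * Kstar + 1),
          designVec Kstar ω (x i) j' * (βt j' - embAux K Kstar B j') := by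
    intro B i
    have h1 : ∑ j : Fin (2 * K + 1), designVec K ω (x i) j * B j
        = ∑ j' : Fin (2 * Kstar + 1), designVec Kstar ω (x i) j' * embAux K Kstar B j' := by
      have hc : ∀ j : Fin (2 * K + 1),
          designVec K ω (x i) j = designVec Kstar ω (x i) (Fin.castLE hle j) := fun j => rfl
      rw [Finset.sum_congr rfl fun j _ => by rw [hc j]]
      exact reindex (n := n) hle _ B
    have hF0 : designVec Kstar ω (x i) 0 = 1 := by
      simp [designVec]
    have h2 : (∑ j' : Fin (2 * Kstar + 1), designVec Kstar ω (x i) j' * βstar j') + c₀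
        = ∑ j' : Fin (2 * Kstar + 1), designVec Kstar ω (x i) j' * βt j' := by
      have hpt : ∀ j' ∈ Finset.univ, designVec Kstar ω (x i) j' * βt j'
          = designVec Kstar ω (x i) j' * βstar j' + (if j' = (0 : Fin (2*Kstar+1)) then c₀ else 0) := by
        intro j' _
        by_cases h : j' = 0
        · subst h
          simp [hβt, hF0]
        · simp only [hβt, if_neg h, add_zero]
      rw [Finset.sum_congr rfl hpt, Finset.sum_add_distrib,
        Finset.sum_ite_eq' Finset.univ (0 : Fin (2*Kstar+1)) fun _ => c₀]
      simp
    rw [h2, h1, ← Finset.sum_sub_distrib]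
    exact Finset.sum_congr rfl fun j' _ => by ring
  -- value of L
  have hLval : ∀ B : Fin (2 * K + 1) → ℝ,
      L B = ∑ j' : Fin (2 * Kstar + 1),
        w j' * ((βt j' - embAux K Kstar B j') * (βt j' - embAux K Kstar B j')) := by
    intro B
    rw [hL B]
    have hpt : ∀ i ∈ Finset.univ,
        ((∑ j' : Fin (2 * Kstar + 1), designVec Kstar ω (x i) j' * βstar j') + c₀ -
          (∑ j : Fin (2 * K + 1), designVec K ω (x i) j * B j)) ^ 2
        = (∑ j' : Fin (2 * Kstar + 1),
            designVec Kstar ω (x i) j' * (βt j' - embAux K Kstar B j'))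
          * (∑ j' : Fin (2 * Kstar + 1),
            designVec Kstar ω (x i) j' * (βt j' - embAux K Kstar B j')) := by
      intro i _
      rw [hresid B i]
      ring
    rw [Finset.sum_congr rfl hpt]
    exact expand2 _ w horth _ _
  -- Bhat matches βt on low coordinates
  have hembBhat : ∀ j' : Fin (2 * Kstar + 1), j'.val < 2 * K + 1 →
      embAux K Kstar Bhat j' = βt j' := by
    intro j' hj'
    unfold embAux
    rw [dif_pos hj']
    by_cases h0 : j'.val = 0
    · have hj0 : j' = (0 : Fin (2*Kstar+1)) := Fin.val_inj.mp (by simpa using h0)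
      have hj0' : (⟨j'.val, hj'⟩ : Fin (2*K+1)) = 0 := Fin.val_inj.mp (by simpa using h0)
      rw [hj0', hBhat0]
      simp [hβt, hj0]
    · have h1 : 1 ≤ (⟨j'.val, hj'⟩ : Fin (2*K+1)).val := by simpa using Nat.one_le_iff_ne_zero.mpr h0
      rw [hBhatj _ h1]
      have hcast : Fin.castLE (show 2*K+1 ≤ 2*Kstar+1 by omega) (⟨j'.val, hj'⟩ : Fin (2*K+1)) = j' :=
        Fin.val_inj.mp rfl
      rw [hcast]
      have : j' ≠ (0 : Fin (2*Kstar+1)) := fun h => h0 (by rw [h]; simp)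
      simp [hβt, this]
  have hembHigh : ∀ (B : Fin (2 * K + 1) → ℝ) (j' : Fin (2 * Kstar + 1)),
      ¬ j'.val < 2 * K + 1 → embAux K Kstar B j' = 0 := by
    intro B j' h
    unfold embAux
    rw [dif_neg h]
  -- termwise difference is nonnegative
  have hterm : ∀ (B : Fin (2 * K + 1) → ℝ) (j' : Fin (2 * Kstar + 1)),
      0 ≤ w j' * ((βt j' - embAux K Kstar B j') * (βt j' - embAux K Kstar B j'))
          - w j' * ((βt j' - embAux K Kstar Bhat j') * (βt j' - embAux K Kstar Bhat j')) := by
    intro B j'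
    by_cases hlow : j'.val < 2 * K + 1
    · rw [hembBhat j' hlow]
      have : (βt j' - βt j') * (βt j' - βt j') = 0 := by ring
      rw [this, mul_zero, sub_zero]
      have := (hwpos j').le
      nlinarith [sq_nonneg (βt j' - embAux K Kstar B j')]
    · rw [hembHigh B j' hlow, hembHigh Bhat j' hlow, sub_self]
  have hdiff : ∀ B : Fin (2 * K + 1) → ℝ,
      L B = L Bhat + ∑ j' : Fin (2 * Kstar + 1),
        (w j' * ((βt j' - embAux K Kstar B j') * (βt j' - embAux K Kstar B j'))
          - w j' * ((βt j' - embAux K Kstar Bhat j') * (βt j' - embAux K Kstar Bhat j'))) := by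
    intro B
    rw [hLval B, hLval Bhat, Finset.sum_sub_distrib]
    ring
  constructor
  · intro B
    have h1 := Finset.sum_nonneg (fun j' (_ : j' ∈ Finset.univ) => hterm B j')
    have h2 := hdiff B
    linarith
  · intro B hB
    have hle' : L B ≤ L Bhat := hB Bhat
    have h2 := hdiff B
    have h1 := Finset.sum_nonneg (fun j' (_ : j' ∈ Finset.univ) => hterm B j')
    have hsum0 : ∑ j' : Fin (2 * Kstar + 1),
        (w j' * ((βt j' - embAux K Kstar B j') * (βt j' - embAux K Kstar B j'))
          - w j' * ((βt j' - embAux K Kstar Bhat j') * (βt j' - embAux K Kstar Bhat j'))) = 0 := by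
      linarith
    have hzero := (Finset.sum_eq_zero_iff_of_nonneg
      (fun j' (_ : j' ∈ Finset.univ) => hterm B j')).mp hsum0
    funext j
    have hjlt : (Fin.castLE hle j).val < 2 * K + 1 := j.isLt
    have hz := hzero (Fin.castLE hle j) (Finset.mem_univ _)
    rw [hembBhat _ hjlt] at hz
    have hz' : w (Fin.castLE hle j) *
        ((βt (Fin.castLE hle j) - embAux K Kstar B (Fin.castLE hle j)) *
         (βt (Fin.castLE hle j) - embAux K Kstar B (Fin.castLE hle j))) = 0 := by
      have : (βt (Fin.castLE hle j) - βt (Fin.castLE hle j)) *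
          (βt (Fin.castLE hle j) - βt (Fin.castLE hle j)) = 0 := by ring
      rw [this, mul_zero, sub_zero] at hz
      exact hz
    have hsq : (βt (Fin.castLE hle j) - embAux K Kstar B (Fin.castLE hle j)) = 0 := by
      have hw := hwpos (Fin.castLE hle j)
      have := mul_eq_zero.mp hz'
      rcases this with h | h
      · exact absurd h hw.ne'
      · exact pow_eq_zero_iff (n := 2) (by norm_num) |>.mp (by rw [pow_two]; exact h)
    have hBj : embAux K Kstar B (Fin.castLE hle j) = B j := by
      unfold embAux
      rw [dif_pos hjlt]
      congr 1
    have hBhatj' : embAux K Kstar Bhat (Fin.castLE hle j) = Bhat j := by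
      unfold embAux
      rw [dif_pos hjlt]
      congr 1
    have := hembBhat (Fin.castLE hle j) hjlt
    rw [hBhatj'] at this
    rw [hBj] at hsq
    linarith [hsq, this]
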